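/- Let η > 0 and let f : ℝ^n → ℝ^n satisfy, for some c₂ > 0 and all x, v: (η/2)‖x-v‖² + λJ(v) - (η/2)‖x-f(x)‖² - λJ(f(x)) ≥ c₂‖∇_v ξ(x,v)‖², where ξ(x,v) = (1/2)‖y-Ax‖² + (η/2)‖x-v‖² + λJ(v). Then the alternating iteration x^{t+1} = x^t - δ∇_x ξ(x^t,v^t), v^{t+1} = f(x^{t+1}) is monotonically nonincreasing in ξ: ξ(x^{t+1},v^{t+1}) ≤ ξ(x^{t+1},v^t) ≤ ξ(x^t,v^t), provided δ ∈ (0, 2/(‖AᵀA‖+η)). -/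

import Mathlib

open Matrix

noncomputable def mulVecE {m n : ℕ} (A : Matrix (Fin m) (Fin n) ℝ)
    (x : EuclideanSpace ℝ (Fin n)) : EuclideanSpace ℝ (Fin m) :=
  (WithLp.equiv 2 (Fin m → ℝ)).symm (A.mulVec ((WithLp.equiv 2 (Fin n → ℝ)) x))

lemma mulVecE_sub {m n : ℕ} (A : Matrix (Fin m) (Fin n) ℝ) (u w : EuclideanSpace ℝ (Fin n)) :
    mulVecE A (u - w) = mulVecE A u - mulVecE A w := by
  simp [mulVecE, Matrix.mulVec_sub]

lemma mulVecE_neg {m n : ℕ} (A : Matrix (Fin m) (Fin n) ℝ) (u : EuclideanSpace ℝ (Fin n)) :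
    mulVecE A (-u) = - mulVecE A u := by
  simp [mulVecE, Matrix.mulVec_neg]

lemma mulVecE_smul {m n : ℕ} (A : Matrix (Fin m) (Fin n) ℝ) (c : ℝ)
    (u : EuclideanSpace ℝ (Fin n)) : mulVecE A (c • u) = c • mulVecE A u := by
  simp [mulVecE, Matrix.mulVec_smul]

lemma inner_mulVecE {m n : ℕ} (A : Matrix (Fin m) (Fin n) ℝ) (u : EuclideanSpace ℝ (Fin n))
    (w : EuclideanSpace ℝ (Fin m)) :
    inner ℝ (mulVecE A u) w = (inner ℝ u (mulVecE Aᵀ w) : ℝ) := by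
  simp only [mulVecE, PiLp.inner_apply, RCLike.inner_apply, conj_trivial]
  show ((WithLp.equiv 2 (Fin m → ℝ)) w) ⬝ᵥ (A.mulVec ((WithLp.equiv 2 (Fin n → ℝ)) u))
      = (Aᵀ.mulVec ((WithLp.equiv 2 (Fin m → ℝ)) w)) ⬝ᵥ ((WithLp.equiv 2 (Fin n → ℝ)) u)
  rw [Matrix.mulVec_transpose, Matrix.dotProduct_mulVec]

lemma mulVecE_toCLM {n : ℕ} (B : Matrix (Fin n) (Fin n) ℝ) (u : EuclideanSpace ℝ (Fin n)) :
    mulVecE B u = Matrix.toEuclideanCLM (𝕜 := ℝ) B u := by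
  simp [mulVecE, Matrix.ofLp_toEuclideanCLM]
  rfl

lemma mulVecE_mul {n m : ℕ} (A : Matrix (Fin m) (Fin n) ℝ) (u : EuclideanSpace ℝ (Fin n)) :
    mulVecE (Aᵀ * A) u = mulVecE Aᵀ (mulVecE A u) := by
  simp [mulVecE, Matrix.mulVec_mulVec]

lemma norm_mulVecE_sq_le {m n : ℕ} (A : Matrix (Fin m) (Fin n) ℝ)
    (d : EuclideanSpace ℝ (Fin n)) :
    ‖mulVecE A d‖ ^ 2 ≤ ‖Matrix.toEuclideanCLM (𝕜 := ℝ) (Aᵀ * A)‖ * ‖d‖ ^ 2 := by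
  have h1 : ‖mulVecE A d‖ ^ 2 = inner ℝ d (mulVecE (Aᵀ * A) d) := by
    rw [mulVecE_mul, ← inner_mulVecE, real_inner_self_eq_norm_sq]
  rw [h1, mulVecE_toCLM]
  calc (inner ℝ d (Matrix.toEuclideanCLM (𝕜 := ℝ) (Aᵀ * A) d) : ℝ)
      ≤ ‖d‖ * ‖Matrix.toEuclideanCLM (𝕜 := ℝ) (Aᵀ * A) d‖ := real_inner_le_norm _ _
    _ ≤ ‖d‖ * (‖Matrix.toEuclideanCLM (𝕜 := ℝ) (Aᵀ * A)‖ * ‖d‖) := by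
        gcongr; exact (Matrix.toEuclideanCLM (𝕜 := ℝ) (Aᵀ * A)).le_opNorm d
    _ = ‖Matrix.toEuclideanCLM (𝕜 := ℝ) (Aᵀ * A)‖ * ‖d‖ ^ 2 := by ring

/-- If the denoiser `f` satisfies the sufficient descent condition, then the alternating
iteration `x⁺ = x - δ∇ₓξ(x,v)`, `v⁺ = f(x⁺)` is monotonically nonincreasing in `ξ`,
provided `δ ∈ (0, 2/(‖AᵀA‖ + η))`. -/
theorem stmt11 {m n : ℕ} (A : Matrix (Fin m) (Fin n) ℝ) (y : EuclideanSpace ℝ (Fin m))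
    (η lam : ℝ) (hη : 0 < η) (hlam : 0 < lam)
    (J : EuclideanSpace ℝ (Fin n) → ℝ)
    (J' : EuclideanSpace ℝ (Fin n) → EuclideanSpace ℝ (Fin n))
    (hJ : ∀ u, HasGradientAt J (J' u) u)
    (f : EuclideanSpace ℝ (Fin n) → EuclideanSpace ℝ (Fin n))
    (c₂ : ℝ) (hc₂ : 0 < c₂)
    (hdescent : ∀ a b : EuclideanSpace ℝ (Fin n),
      η / 2 * ‖a - b‖ ^ 2 + lam * J b - η / 2 * ‖a - f a‖ ^ 2 - lam * J (f a) ≥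
        c₂ * ‖η • (b - a) + lam • J' b‖ ^ 2)
    (δ : ℝ) (hδ : δ ∈ Set.Ioo 0 (2 / (‖Matrix.toEuclideanCLM (𝕜 := ℝ) (Aᵀ * A)‖ + η)))
    (x v : ℕ → EuclideanSpace ℝ (Fin n))
    (hxstep : ∀ t, x (t + 1) =
      x t - δ • (mulVecE Aᵀ (mulVecE A (x t) - y) + η • (x t - v t)))
    (hvstep : ∀ t, v (t + 1) = f (x (t + 1))) :
    ∀ t, (1 / 2 * ‖y - mulVecE A (x (t + 1))‖ ^ 2 +
            η / 2 * ‖x (t + 1) - v (t + 1)‖ ^ 2 + lam * J (v (t + 1)) ≤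
          1 / 2 * ‖y - mulVecE A (x (t + 1))‖ ^ 2 +
            η / 2 * ‖x (t + 1) - v t‖ ^ 2 + lam * J (v t)) ∧
        (1 / 2 * ‖y - mulVecE A (x (t + 1))‖ ^ 2 +
            η / 2 * ‖x (t + 1) - v t‖ ^ 2 + lam * J (v t) ≤
          1 / 2 * ‖y - mulVecE A (x t)‖ ^ 2 +
            η / 2 * ‖x t - v t‖ ^ 2 + lam * J (v t)) := by
  intro t
  constructor
  · -- v-step: from the sufficient descent condition
    have hd := hdescent (x (t + 1)) (v t)
    have hsq : 0 ≤ c₂ * ‖η • (v t - x (t + 1)) + lam • J' (v t)‖ ^ 2 := by positivity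
    rw [hvstep t]
    linarith
  · -- x-step: gradient descent on a quadratic
    set N := ‖Matrix.toEuclideanCLM (𝕜 := ℝ) (Aᵀ * A)‖ with hN
    set r := y - mulVecE A (x t) with hr
    set w := x t - v t with hw
    set d := mulVecE Aᵀ (mulVecE A (x t) - y) + η • w with hd
    have hx : x (t + 1) = x t - δ • d := hxstep t
    have h1 : y - mulVecE A (x (t + 1)) = r + δ • mulVecE A d := by
      rw [hx, mulVecE_sub, mulVecE_smul, hr]; abel
    have h2 : x (t + 1) - v t = w - δ • d := by rw [hx, hw]; abel
    have hs : mulVecE A (x t) - y = -r := by rw [hr]; abel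
    have hAtr : mulVecE Aᵀ r = η • w - d := by
      rw [hd, hs, mulVecE_neg]; abel
    have hinner : (inner ℝ r (mulVecE A d) : ℝ) = η * inner ℝ w d - inner ℝ d d := by
      rw [real_inner_comm, inner_mulVecE, hAtr, inner_sub_right, real_inner_smul_right,
        real_inner_comm d w]
    have hdd : (inner ℝ d d : ℝ) = ‖d‖ ^ 2 := real_inner_self_eq_norm_sq d
    have e1 : ‖r + δ • mulVecE A d‖ ^ 2
        = ‖r‖ ^ 2 + 2 * (δ * inner ℝ r (mulVecE A d)) + δ ^ 2 * ‖mulVecE A d‖ ^ 2 := by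
      rw [norm_add_sq_real, real_inner_smul_right, norm_smul, mul_pow, Real.norm_eq_abs, sq_abs]
    have e2 : ‖w - δ • d‖ ^ 2 = ‖w‖ ^ 2 - 2 * (δ * inner ℝ w d) + δ ^ 2 * ‖d‖ ^ 2 := by
      rw [norm_sub_sq_real, real_inner_smul_right, norm_smul, mul_pow, Real.norm_eq_abs, sq_abs]
    have hAd := norm_mulVecE_sq_le A d
    have hδ0 : 0 < δ := hδ.1
    have hNpos : 0 < N + η := by positivity
    have hδ2 : δ * (N + η) < 2 := by
      have := hδ.2
      rw [lt_div_iff₀ hNpos] at this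
      linarith
    have hdnn : (0:ℝ) ≤ ‖d‖ ^ 2 := by positivity
    rw [hdd] at hinner
    rw [h1, h2, e1, e2, hinner]
    have key : δ ^ 2 / 2 * ‖mulVecE A d‖ ^ 2 + η * (δ ^ 2 / 2) * ‖d‖ ^ 2 ≤ δ * ‖d‖ ^ 2 := by
      nlinarith [mul_le_mul_of_nonneg_left hAd (by positivity : (0:ℝ) ≤ δ ^ 2 / 2),
        mul_le_mul_of_nonneg_right (le_of_lt hδ2) (mul_nonneg (le_of_lt hδ0) hdnn),
        mul_le_mul_of_nonneg_right (le_of_lt hδ2)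
          (mul_nonneg (mul_nonneg (le_of_lt hδ0) hdnn) (le_of_lt hδ0))]
    linarith [key]
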